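/- Let n ≥ 1, let S_n be the star graph on vertices {0,1,...,n-1}, and let M be one of IEnd(S_n), PEnd(S_n), PwEnd(S_n). For α, β ∈ M, α L β in M (Green's L-relation) if and only if one of the following holds: (1) im(α) = im(β) and |im(α)| ≤ 1; (2) im(α) = im(β), |im(α)| ≥ 2, and (0 ∈ dom(α) iff 0 ∈ dom(β)). -/

import Mathlib

def pmul {V : Type*} (f g : V → Option V) : V → Option V := fun x => (f x).bind g

def pdom {V : Type*} (f : V → Option V) : Set V := {x | f x ≠ none}

def pim {V : Type*} (f : V → Option V) : Set V := {y | ∃ x, f x = some y}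

def pker {V : Type*} (f : V → Option V) : V → V → Prop := fun x y => f x ≠ none ∧ f x = f y

def PInj {V : Type*} (f : V → Option V) : Prop := ∀ u v a, f u = some a → f v = some a → u = v

def edge {n : ℕ} (u v : Fin n) : Prop := (u.val = 0 ∧ v.val ≠ 0) ∨ (v.val = 0 ∧ u.val ≠ 0)

def IsPEnd {n : ℕ} (α : Fin n → Option (Fin n)) : Prop :=
  ∀ u v a b, α u = some a → α v = some b → edge u v → edge a b

def IsPwEnd {n : ℕ} (α : Fin n → Option (Fin n)) : Prop :=
  ∀ u v a b, α u = some a → α v = some b → edge u v → a ≠ b → edge a b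

def IsPsEnd {n : ℕ} (α : Fin n → Option (Fin n)) : Prop :=
  ∀ u v a b, α u = some a → α v = some b → (edge u v ↔ edge a b)

def IsPswEnd {n : ℕ} (α : Fin n → Option (Fin n)) : Prop :=
  ∀ u v a b, α u = some a → α v = some b → ((edge u v ∧ a ≠ b) ↔ edge a b)

def PEndS (n : ℕ) : Set (Fin n → Option (Fin n)) := {α | IsPEnd α}
def PwEndS (n : ℕ) : Set (Fin n → Option (Fin n)) := {α | IsPwEnd α}
def PsEndS (n : ℕ) : Set (Fin n → Option (Fin n)) := {α | IsPsEnd α}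
def PswEndS (n : ℕ) : Set (Fin n → Option (Fin n)) := {α | IsPswEnd α}
def IEndS (n : ℕ) : Set (Fin n → Option (Fin n)) := {α | PInj α ∧ IsPEnd α}
def PAutS (n : ℕ) : Set (Fin n → Option (Fin n)) := {α | PInj α ∧ IsPsEnd α}

def RegularIn {V : Type*} (M : Set (V → Option V)) (a : V → Option V) : Prop :=
  ∃ b ∈ M, pmul (pmul a b) a = a

def GreenL {V : Type*} (M : Set (V → Option V)) (a b : V → Option V) : Prop :=
  (∃ g ∈ M, a = pmul g b) ∧ (∃ g ∈ M, b = pmul g a)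

def GreenR {V : Type*} (M : Set (V → Option V)) (a b : V → Option V) : Prop :=
  (∃ g ∈ M, a = pmul b g) ∧ (∃ g ∈ M, b = pmul a g)

def GreenH {V : Type*} (M : Set (V → Option V)) (a b : V → Option V) : Prop :=
  GreenL M a b ∧ GreenR M a b

def GreenJ {V : Type*} (M : Set (V → Option V)) (a b : V → Option V) : Prop :=
  (∃ g ∈ M, ∃ h ∈ M, a = pmul (pmul g b) h) ∧ (∃ g ∈ M, ∃ h ∈ M, b = pmul (pmul g a) h)

/-!
`α = g β` (first `g`, then `β`) for some `g ∈ M` exactly when `im α ⊆ im β` and, if `|im α| ≥ 2`,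
`0 ∈ dom α` forces `0 ∈ dom β`; the theorem is this criterion applied in both directions.

Necessity: a weak endomorphism of the star sending the centre to a leaf `w` has image in `{w, 0}`,
so if `α(0) = β(g 0)` is defined but `β(0)` is not, `g 0` is a leaf and `im α` is a single point.
Sufficiency: take `g = s ∘ α`, where `s` is a section of `β` over `im β` sending `β(0)` back
to `0`. An edge `{0, v}` on which `α` is not constant is mapped by `α` to two points of `im β`
exactly one of which is `β(0)`, so `s` sends them to the centre and to a leaf.
-/

section PartialMaps

variable {V : Type*}

lemma mem_pdom {f : V → Option V} {x : V} : x ∈ pdom f ↔ f x ≠ none := Iff.rfl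

lemma pmul_eq_some {f g : V → Option V} {x y : V} :
    pmul f g x = some y ↔ ∃ w, f x = some w ∧ g w = some y :=
  Option.bind_eq_some_iff

lemma pim_pmul_subset (g β : V → Option V) : pim (pmul g β) ⊆ pim β := by
  rintro y ⟨x, hx⟩
  obtain ⟨u, -, hu⟩ := pmul_eq_some.mp hx
  exact ⟨u, hu⟩

lemma one_lt_ncard_pim [Finite V] {f : V → Option V} {x y a b : V}
    (ha : f x = some a) (hb : f y = some b) (hab : a ≠ b) : 1 < (pim f).ncard :=
  (Set.one_lt_ncard_iff (Set.toFinite _)).mpr ⟨a, b, ⟨x, ha⟩, ⟨y, hb⟩, hab⟩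

open Classical in
noncomputable def psection (β : V → Option V) (z : V) : V → Option V := fun y =>
  if β z = some y then some z
  else if h : ∃ u, β u = some y then some h.choose else none

variable {β : V → Option V} {z y u : V}

lemma psection_spec (h : psection β z y = some u) : β u = some y := by
  unfold psection at h
  split_ifs at h with h₁ h₂
  · cases h; exact h₁
  · cases h; exact h₂.choose_spec

lemma psection_eq_some_self (h : β z = some y) : psection β z y = some z := by
  simp [psection, h]

lemma psection_ne_none (h : y ∈ pim β) : psection β z y ≠ none := by
  unfold psection
  split_ifs with _ h'
  · exact Option.some_ne_none _
  · exact Option.some_ne_none _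
  · exact absurd h h'

lemma pmul_pmul_psection {α : V → Option V} (h : pim α ⊆ pim β) (z : V) :
    pmul (pmul α (psection β z)) β = α := by
  funext x
  cases hx : α x with
  | none => simp [pmul, hx]
  | some y =>
    obtain ⟨u, hu⟩ := Option.ne_none_iff_exists'.mp (psection_ne_none (z := z) (h ⟨x, hx⟩))
    simp [pmul, hx, hu, psection_spec hu]

lemma PInj.pmul_psection {α : V → Option V} (hα : PInj α) (z : V) :
    PInj (pmul α (psection β z)) := by
  intro u v a hu hv
  obtain ⟨y₁, hy₁, h₁⟩ := pmul_eq_some.mp hu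
  obtain ⟨y₂, hy₂, h₂⟩ := pmul_eq_some.mp hv
  obtain rfl : y₁ = y₂ := Option.some_injective _ ((psection_spec h₁).symm.trans (psection_spec h₂))
  exact hα u v y₁ hy₁ hy₂

end PartialMaps

section Star

variable {n : ℕ} {α β : Fin n → Option (Fin n)} {z : Fin n}

lemma edge_iff {u v : Fin n} : edge u v ↔ (u.val = 0 ↔ v.val ≠ 0) := by
  unfold edge; tauto

lemma edge_comm {u v : Fin n} : edge u v ↔ edge v u := by
  simp only [edge_iff]; tauto

lemma edge_ne {u v : Fin n} (h : edge u v) : u ≠ v := by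
  rintro rfl; rw [edge_iff] at h; tauto

lemma IsPEnd.isPwEnd (h : IsPEnd α) : IsPwEnd α :=
  fun u v a b hu hv he _ => h u v a b hu hv he

lemma IsPwEnd.pim_subset_pair (hβ : IsPwEnd β) (hz : z.val = 0) {c : Fin n}
    (hc : β z = some c) (hc0 : c.val ≠ 0) : pim β ⊆ {c, z} := by
  rintro y ⟨u, hu⟩
  by_cases hyc : y = c
  · exact Or.inl hyc
  by_cases hu0 : u.val = 0
  · rw [Fin.ext (hu0.trans hz.symm), hc] at hu
    exact Or.inl (Option.some_injective _ hu).symm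
  have hcy := edge_iff.mp (hβ z u c y hc hu (edge_iff.mpr (by tauto)) (Ne.symm hyc))
  exact Or.inr (Fin.ext (by omega))

lemma IsPwEnd.mem_pdom_of_mem_pdom_pmul {h : Fin n → Option (Fin n)} (hh : IsPwEnd h)
    (hz : z.val = 0) (h2 : 2 ≤ (pim (pmul h α)).ncard) (hd : z ∈ pdom (pmul h α)) :
    z ∈ pdom α := by
  obtain ⟨t, ht⟩ := Option.ne_none_iff_exists'.mp hd
  obtain ⟨w, hw, hwt⟩ := pmul_eq_some.mp ht
  by_cases hw0 : w.val = 0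
  · rw [Fin.ext (hw0.trans hz.symm)] at hwt
    simp [mem_pdom, hwt]
  intro hαz
  have hsub : pim (pmul h α) ⊆ {t} := by
    rintro y ⟨x, hx⟩
    obtain ⟨u, hu, huy⟩ := pmul_eq_some.mp hx
    rcases hh.pim_subset_pair hz hw hw0 ⟨x, hu⟩ with rfl | rfl
    · exact Option.some_injective _ (huy.symm.trans hwt)
    · simp [hαz] at huy
  have := (Set.ncard_le_ncard hsub (Set.finite_singleton t)).trans_eq (Set.ncard_singleton t)
  omega

lemma IsPwEnd.eq_or_eq_of_center (hα : IsPwEnd α) (hβ : IsPwEnd β) (hz : z.val = 0)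
    (hsub : pim α ⊆ pim β) {v a b c : Fin n} (hc : β z = some c) (ha : α z = some a)
    (hb : α v = some b) (hv : v.val ≠ 0) (hab : a ≠ b) : a = c ∨ b = c := by
  have hedge := edge_iff.mp (hα z v a b ha hb (edge_iff.mpr (by tauto)) hab)
  by_cases hc0 : c.val = 0
  · simp only [Fin.ext_iff]; omega
  · have hpair := hβ.pim_subset_pair hz hc hc0
    have ha' := hpair (hsub ⟨z, ha⟩)
    have hb' := hpair (hsub ⟨v, hb⟩)
    simp only [Set.mem_insert_iff, Set.mem_singleton_iff, Fin.ext_iff] at ha' hb' hab ⊢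
    omega

lemma edge_of_psection (hz : z.val = 0) {a b c p q : Fin n} (hc : β z = some c) (hab : a ≠ b)
    (habc : a = c ∨ b = c) (hp : psection β z a = some p) (hq : psection β z b = some q) :
    edge p q := by
  have key : ∀ {y r}, psection β z y = some r → (r.val = 0 ↔ y = c) := by
    intro y r hr
    constructor
    · intro hr0
      have hy := psection_spec hr
      rw [Fin.ext (hr0.trans hz.symm), hc] at hy
      exact (Option.some_injective _ hy).symm
    · rintro rfl
      rw [psection_eq_some_self hc, Option.some_inj] at hr
      rw [← hr, hz]
  rw [edge_iff, ne_eq, key hp, key hq]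
  rcases habc with rfl | rfl <;> tauto

lemma edge_of_pmul_psection (hα : IsPwEnd α) (hβ : IsPwEnd β) (hz : z.val = 0)
    (hsub : pim α ⊆ pim β) (hdom : (pim α).ncard ≤ 1 ∨ (z ∈ pdom α → z ∈ pdom β))
    {u v a b p q : Fin n} (hu : α u = some a) (hv : α v = some b) (huv : edge u v) (hab : a ≠ b)
    (hp : psection β z a = some p) (hq : psection β z b = some q) : edge p q := by
  wlog hu0 : u.val = 0 generalizing u v a b p q
  · have hv0 : v.val = 0 := by rw [edge_iff] at huv; tauto
    exact edge_comm.mp (this hv hu (edge_comm.mp huv) hab.symm hq hp hv0)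
  obtain rfl : u = z := Fin.ext (hu0.trans hz.symm)
  have hv0 : v.val ≠ 0 := (edge_iff.mp huv).mp hu0
  obtain ⟨c, hc⟩ : ∃ c, β u = some c := by
    refine Option.ne_none_iff_exists'.mp ?_
    rcases hdom with h1 | h1
    · have := one_lt_ncard_pim hu hv hab
      omega
    · exact h1 (by simp [mem_pdom, hu])
  exact edge_of_psection hz hc hab (hα.eq_or_eq_of_center hβ hz hsub hc hu hv hv0 hab) hp hq

lemma IsPwEnd.pmul_psection (hα : IsPwEnd α) (hβ : IsPwEnd β) (hz : z.val = 0)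
    (hsub : pim α ⊆ pim β) (hdom : (pim α).ncard ≤ 1 ∨ (z ∈ pdom α → z ∈ pdom β)) :
    IsPwEnd (pmul α (psection β z)) := by
  intro u v p q hp hq huv hpq
  obtain ⟨a, ha, hap⟩ := pmul_eq_some.mp hp
  obtain ⟨b, hb, hbq⟩ := pmul_eq_some.mp hq
  refine edge_of_pmul_psection hα hβ hz hsub hdom ha hb huv ?_ hap hbq
  rintro rfl
  exact hpq (Option.some_injective _ (hap.symm.trans hbq))

lemma IsPEnd.pmul_psection (hα : IsPEnd α) (hβ : IsPwEnd β) (hz : z.val = 0)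
    (hsub : pim α ⊆ pim β) (hdom : (pim α).ncard ≤ 1 ∨ (z ∈ pdom α → z ∈ pdom β)) :
    IsPEnd (pmul α (psection β z)) := by
  intro u v p q hp hq huv
  obtain ⟨a, ha, hap⟩ := pmul_eq_some.mp hp
  obtain ⟨b, hb, hbq⟩ := pmul_eq_some.mp hq
  exact edge_of_pmul_psection hα.isPwEnd hβ hz hsub hdom ha hb huv
    (edge_ne (hα u v a b ha hb huv)) hap hbq

variable {M : Set (Fin n → Option (Fin n))}

lemma isPwEnd_of_mem (hM : M = IEndS n ∨ M = PEndS n ∨ M = PwEndS n) {γ : Fin n → Option (Fin n)}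
    (hγ : γ ∈ M) : IsPwEnd γ := by
  rcases hM with rfl | rfl | rfl
  exacts [hγ.2.isPwEnd, IsPEnd.isPwEnd hγ, hγ]

lemma exists_mem_pmul_eq_iff (hM : M = IEndS n ∨ M = PEndS n ∨ M = PwEndS n) (hα : α ∈ M)
    (hβ : β ∈ M) (hz : z.val = 0) :
    (∃ g ∈ M, α = pmul g β) ↔
      pim α ⊆ pim β ∧ ((pim α).ncard ≤ 1 ∨ (z ∈ pdom α → z ∈ pdom β)) := by
  constructor
  · rintro ⟨g, hg, rfl⟩
    refine ⟨pim_pmul_subset g β, or_iff_not_imp_left.mpr fun h1 => ?_⟩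
    exact (isPwEnd_of_mem hM hg).mem_pdom_of_mem_pdom_pmul hz (by omega)
  · rintro ⟨hsub, hdom⟩
    refine ⟨pmul α (psection β z), ?_, (pmul_pmul_psection hsub z).symm⟩
    have hβw := isPwEnd_of_mem hM hβ
    rcases hM with rfl | rfl | rfl
    · exact ⟨hα.1.pmul_psection z, hα.2.pmul_psection hβw hz hsub hdom⟩
    · exact IsPEnd.pmul_psection hα hβw hz hsub hdom
    · exact IsPwEnd.pmul_psection hα hβw hz hsub hdom

end Star

theorem stmt15 (n : ℕ) (hn : 1 ≤ n) (M : Set (Fin n → Option (Fin n)))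
    (hM : M = IEndS n ∨ M = PEndS n ∨ M = PwEndS n)
    (α β : Fin n → Option (Fin n)) (hα : α ∈ M) (hβ : β ∈ M) :
    GreenL M α β ↔
      ((pim α = pim β ∧ (pim α).ncard ≤ 1)
        ∨ (pim α = pim β ∧ 2 ≤ (pim α).ncard
            ∧ ((⟨0, hn⟩ : Fin n) ∈ pdom α ↔ (⟨0, hn⟩ : Fin n) ∈ pdom β))) := by
  have hz : (⟨0, hn⟩ : Fin n).val = 0 := rfl
  rw [GreenL, exists_mem_pmul_eq_iff hM hα hβ hz, exists_mem_pmul_eq_iff hM hβ hα hz]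
  constructor
  · rintro ⟨⟨hαβ, hα1⟩, hβα, hβ1⟩
    have him := hαβ.antisymm hβα
    rw [← him] at hβ1
    by_cases h1 : (pim α).ncard ≤ 1
    · exact Or.inl ⟨him, h1⟩
    · exact Or.inr ⟨him, by omega, hα1.resolve_left h1, hβ1.resolve_left h1⟩
  · rintro (⟨him, h1⟩ | ⟨him, -, hd⟩)
    · exact ⟨⟨him.subset, .inl h1⟩, him.symm.subset, .inl (him ▸ h1)⟩
    · exact ⟨⟨him.subset, .inr hd.1⟩, him.symm.subset, .inr hd.2⟩
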